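/- arXiv:2401.04657 — 5 statements merged into one kernel-verified Lean document; each statement's English description precedes it below -/
import Mathlib

section
/- Let T : X → X be an invertible linear operator with ‖T⁻¹‖ < 1 (operator norm). Then for every x ∈ X and every V ∈ ∂_C P_K(x), the operator V + T is invertible and ‖(V + T)⁻¹‖ ≤ ‖T⁻¹‖ / (1 − ‖T⁻¹‖). -/
/-!
A nearest-point map onto a convex set is firmly nonexpansive, hence 1-Lipschitz, so all its
Fréchet derivatives, their limits and the convex hull of those limits have operator norm at most
`1`. Writing `V + T = T (1 + T⁻¹ V)` with `‖T⁻¹ V‖ ≤ ‖T⁻¹‖ < 1`, the Neumann series inverts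
`1 + T⁻¹ V` with norm at most `1 / (1 - ‖T⁻¹‖)`.
-/

open RealInnerProductSpace Filter Topology

variable {X : Type*} [NormedAddCommGroup X] [InnerProductSpace ℝ X] [FiniteDimensional ℝ X]

/-- The Clarke generalized Jacobian of a map `F : X → X` at `x`: the convex hull of all
limits of Fréchet derivatives of `F` along sequences of differentiability points
converging to `x`. -/
def clarkeJacobian (F : X → X) (x : X) : Set (X →L[ℝ] X) :=
  convexHull ℝ {V : X →L[ℝ] X | ∃ u : ℕ → X,
    (∀ k, DifferentiableAt ℝ F (u k)) ∧
    Tendsto u atTop (𝓝 x) ∧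
    Tendsto (fun k => fderiv ℝ F (u k)) atTop (𝓝 V)}

/-- `P` is the metric projection onto `K`: `P z` belongs to `K` and is a nearest point
of `K` to `z`. -/
def IsMetricProjection (K : Set X) (P : X → X) : Prop :=
  ∀ z : X, P z ∈ K ∧ ∀ y ∈ K, ‖z - P z‖ ≤ ‖z - y‖

section NeumannSeries

variable {R : Type*} [NormedRing R] [HasSummableGeomSeries R]

lemma norm_oneSub_inv_le (h1 : ‖(1 : R)‖ ≤ 1) {t : R} (ht : ‖t‖ < 1) :
    ‖((Units.oneSub t ht)⁻¹ : Rˣ).val‖ ≤ (1 - ‖t‖)⁻¹ :=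
  (tsum_geometric_le_of_norm_lt_one t ht).trans (by linarith)

lemma exists_inverse_add_of_norm_mul_lt_one (h1 : ‖(1 : R)‖ ≤ 1) {a b v : R}
    (hab : a * b = 1) (hba : b * a = 1) (hbv : ‖b‖ * ‖v‖ < 1) :
    ∃ w : R, (v + a) * w = 1 ∧ w * (v + a) = 1 ∧ ‖w‖ ≤ ‖b‖ / (1 - ‖b‖ * ‖v‖) := by
  have ht : ‖-(b * v)‖ ≤ ‖b‖ * ‖v‖ := (norm_neg (b * v)).trans_le (norm_mul_le b v)
  set u := Units.oneSub (-(b * v)) (ht.trans_lt hbv)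
  have hfactor : v + a = a * u := by
    rw [Units.val_oneSub, sub_neg_eq_add, mul_add, mul_one, ← mul_assoc, hab, one_mul, add_comm]
  refine ⟨u⁻¹.val * b, ?_, ?_, ?_⟩
  · rw [hfactor, mul_assoc, ← mul_assoc u.val, u.mul_inv, one_mul, hab]
  · rw [hfactor, mul_assoc, ← mul_assoc b, hba, one_mul, u.inv_mul]
  · calc ‖u⁻¹.val * b‖ ≤ ‖u⁻¹.val‖ * ‖b‖ := norm_mul_le _ _
      _ ≤ (1 - ‖b‖ * ‖v‖)⁻¹ * ‖b‖ := by
        gcongr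
        exact (norm_oneSub_inv_le h1 _).trans (by gcongr)
      _ = ‖b‖ / (1 - ‖b‖ * ‖v‖) := by ring

end NeumannSeries

section Projection

variable {E : Type*} [NormedAddCommGroup E] [InnerProductSpace ℝ E]

namespace IsMetricProjection

variable {K : Set E} {P : E → E}

lemma inner_sub_nonpos (hK : Convex ℝ K) (hP : IsMetricProjection K P) (z : E) {w : E}
    (hw : w ∈ K) : ⟪z - P z, w - P z⟫ ≤ 0 := by
  have : Nonempty K := ⟨⟨P z, (hP z).1⟩⟩
  refine (norm_eq_iInf_iff_real_inner_le_zero hK (hP z).1).1 ?_ w hw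
  refine le_antisymm (le_ciInf fun y => (hP z).2 y y.2) ?_
  exact ciInf_le ⟨0, Set.forall_mem_range.2 fun _ => norm_nonneg _⟩ (⟨P z, (hP z).1⟩ : K)

/-- Firm nonexpansiveness: add the variational inequalities at `a` and at `b`. -/
lemma norm_sub_sq_le_inner (hK : Convex ℝ K) (hP : IsMetricProjection K P) (a b : E) :
    ‖P a - P b‖ ^ 2 ≤ ⟪a - b, P a - P b⟫ := by
  have ha := hP.inner_sub_nonpos hK a (hP b).1
  have hb := hP.inner_sub_nonpos hK b (hP a).1
  rw [← real_inner_self_eq_norm_sq]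
  simp only [inner_sub_left, inner_sub_right, real_inner_comm (P a) (P b)] at ha hb ⊢
  linarith

lemma lipschitzWith_one (hK : Convex ℝ K) (hP : IsMetricProjection K P) :
    LipschitzWith 1 P := by
  refine LipschitzWith.of_dist_le_mul fun a b => ?_
  rw [dist_eq_norm, dist_eq_norm, NNReal.coe_one, one_mul]
  have h := (hP.norm_sub_sq_le_inner hK a b).trans (real_inner_le_norm _ _)
  nlinarith [norm_nonneg (a - b), norm_nonneg (P a - P b)]

end IsMetricProjection

lemma norm_le_of_mem_clarkeJacobian {F : E → E} {L : NNReal} (hF : LipschitzWith L F) {x : E}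
    {V : E →L[ℝ] E} (hV : V ∈ clarkeJacobian F x) : ‖V‖ ≤ L := by
  suffices hlim : {V : E →L[ℝ] E | ∃ u : ℕ → E, (∀ k, DifferentiableAt ℝ F (u k)) ∧
      Tendsto u atTop (𝓝 x) ∧ Tendsto (fun k => fderiv ℝ F (u k)) atTop (𝓝 V)} ⊆
      Metric.closedBall 0 L by
    simpa using convexHull_min hlim (convex_closedBall _ _) hV
  rintro V₀ ⟨u, -, -, hderiv⟩
  rw [mem_closedBall_zero_iff]
  exact le_of_tendsto' hderiv.norm fun k => norm_fderiv_le_of_lipschitz ℝ hF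

end Projection

theorem clarkeJacobian_add_T_invertible_general
    (K : Set X) (hconv : Convex ℝ K)
    (P : X → X) (hP : IsMetricProjection K P)
    (T S : X →L[ℝ] X) (hTS : T * S = 1) (hST : S * T = 1) (hS : ‖S‖ < 1)
    (x : X) (V : X →L[ℝ] X) (hV : V ∈ clarkeJacobian P x) :
    ∃ W : X →L[ℝ] X, (V + T) * W = 1 ∧ W * (V + T) = 1 ∧ ‖W‖ ≤ ‖S‖ / (1 - ‖S‖) := by
  have hV1 : ‖V‖ ≤ 1 := by
    simpa using norm_le_of_mem_clarkeJacobian (hP.lipschitzWith_one hconv) hV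
  have hSV : ‖S‖ * ‖V‖ ≤ ‖S‖ := mul_le_of_le_one_right (norm_nonneg S) hV1
  obtain ⟨W, hW₁, hW₂, hW⟩ := exists_inverse_add_of_norm_mul_lt_one
    ContinuousLinearMap.norm_id_le hTS hST (hSV.trans_lt hS)
  exact ⟨W, hW₁, hW₂, hW.trans (div_le_div_of_nonneg_left (norm_nonneg S) (by linarith)
    (by linarith))⟩

/-- If `T` is invertible with `‖T⁻¹‖ < 1`, then for every Clarke generalized Jacobian `V` of
the projection, `V + T` is invertible with `‖(V + T)⁻¹‖ ≤ ‖T⁻¹‖ / (1 − ‖T⁻¹‖)`. -/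
theorem clarkeJacobian_add_T_invertible
    (K : Set X) (hne : K.Nonempty) (hcl : IsClosed K) (hconv : Convex ℝ K)
    (hcone : ∀ c : ℝ, 0 ≤ c → ∀ y ∈ K, c • y ∈ K)
    (P : X → X) (hP : IsMetricProjection K P)
    (T S : X →L[ℝ] X) (hTS : T * S = 1) (hST : S * T = 1) (hS : ‖S‖ < 1)
    (x : X) (V : X →L[ℝ] X) (hV : V ∈ clarkeJacobian P x) :
    ∃ W : X →L[ℝ] X, (V + T) * W = 1 ∧ W * (V + T) = 1 ∧ ‖W‖ ≤ ‖S‖ / (1 - ‖S‖) :=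
  clarkeJacobian_add_T_invertible_general K hconv P hP T S hTS hST hS x V hV
end

section
/- Let T : X → X be a linear operator, b ∈ X, and let x, x⁺ ∈ X and V be a linear operator with V ∈ ∂_C P_K(x) and V ∈ ∂_C P_K(x⁺). If (V + T)x⁺ = b, then x⁺ solves the projection equation: P_K(x⁺) + Tx⁺ = b. -/
open RealInnerProductSpace Filter Topology

variable {X : Type*} [NormedAddCommGroup X] [InnerProductSpace ℝ X] [FiniteDimensional ℝ X]

section Aux
variable {K : Set X} {P : X → X}

lemma min_norm_eq_iInf {z p : X} (hp : p ∈ K)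
    (hmin : ∀ y ∈ K, ‖z - p‖ ≤ ‖z - y‖) : ‖z - p‖ = ⨅ w : K, ‖z - w‖ := by
  haveI : Nonempty K := ⟨⟨p, hp⟩⟩
  apply le_antisymm
  · exact le_ciInf fun w => hmin w w.2
  · exact ciInf_le ⟨0, by rintro _ ⟨w, rfl⟩; exact norm_nonneg _⟩ (⟨p, hp⟩ : K)

lemma proj_inner_le (hconv : Convex ℝ K) (hP : IsMetricProjection K P) (z : X) :
    ∀ w ∈ K, ⟪z - P z, w - P z⟫ ≤ 0 :=
  (norm_eq_iInf_iff_real_inner_le_zero hconv (hP z).1).mp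
    (min_norm_eq_iInf (hP z).1 (hP z).2)

lemma proj_unique (hconv : Convex ℝ K) (hP : IsMetricProjection K P)
    {z p : X} (hp : p ∈ K) (hmin : ∀ y ∈ K, ‖z - p‖ ≤ ‖z - y‖) : P z = p := by
  have h1 := proj_inner_le hconv hP z p hp
  have h2 := (norm_eq_iInf_iff_real_inner_le_zero hconv hp).mp
    (min_norm_eq_iInf hp hmin) (P z) (hP z).1
  have hkey : ⟪P z - p, P z - p⟫ ≤ 0 := by
    have hc1 := real_inner_comm (z - P z) (p - P z)
    have hc2 := real_inner_comm (z - p) (P z - p)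
    simp only [inner_sub_left, inner_sub_right] at *
    have := real_inner_comm p (P z)
    linarith
  have := real_inner_self_nonpos (x := P z - p)
  rw [sub_eq_zero] at this
  exact this.mp hkey

lemma proj_lipschitz (hconv : Convex ℝ K) (hP : IsMetricProjection K P) (u v : X) :
    ‖P u - P v‖ ≤ ‖u - v‖ := by
  have h1 := proj_inner_le hconv hP u (P v) (hP v).1
  have h2 := proj_inner_le hconv hP v (P u) (hP u).1
  have key : ⟪P u - P v, P u - P v⟫ ≤ ⟪u - v, P u - P v⟫ := by
    have hc1 := real_inner_comm (u - P u) (P v - P u)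
    have hc2 := real_inner_comm (v - P v) (P u - P v)
    simp only [inner_sub_left, inner_sub_right] at *
    have := real_inner_comm (P u) (P v)
    linarith
  have hcs := real_inner_le_norm (u - v) (P u - P v)
  rw [real_inner_self_eq_norm_mul_norm] at key
  nlinarith [norm_nonneg (P u - P v), norm_nonneg (u - v)]

lemma proj_smul (hconv : Convex ℝ K) (hcone : ∀ c : ℝ, 0 ≤ c → ∀ y ∈ K, c • y ∈ K)
    (hP : IsMetricProjection K P) {c : ℝ} (hc : 0 < c) (z : X) :
    P (c • z) = c • P z := by
  apply proj_unique hconv hP (hcone c hc.le _ (hP z).1)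
  intro y hy
  have hy' : c⁻¹ • y ∈ K := hcone c⁻¹ (by positivity) y hy
  have h := (hP z).2 _ hy'
  calc ‖c • z - c • P z‖ = c * ‖z - P z‖ := by
        rw [← smul_sub, norm_smul, Real.norm_eq_abs, abs_of_pos hc]
    _ ≤ c * ‖z - c⁻¹ • y‖ := by nlinarith
    _ = ‖c • (z - c⁻¹ • y)‖ := by
        rw [norm_smul, Real.norm_eq_abs, abs_of_pos hc]
    _ = ‖c • z - y‖ := by
        rw [smul_sub, smul_smul, mul_inv_cancel₀ hc.ne', one_smul]

lemma fderiv_apply_self (hconv : Convex ℝ K)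
    (hcone : ∀ c : ℝ, 0 ≤ c → ∀ y ∈ K, c • y ∈ K)
    (hP : IsMetricProjection K P) {u : X} (hu : DifferentiableAt ℝ P u) :
    fderiv ℝ P u u = P u := by
  have hs : HasDerivAt (fun t : ℝ => t • u) u 1 := by
    simpa using (hasDerivAt_id (1 : ℝ)).smul_const u
  have h1 : HasDerivAt (fun t : ℝ => P (t • u)) (fderiv ℝ P u u) 1 := by
    have hu' : HasFDerivAt P (fderiv ℝ P u) ((1 : ℝ) • u) := by
      simpa using hu.hasFDerivAt
    simpa [Function.comp_def] using hu'.comp_hasDerivAt (1 : ℝ) hs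
  have h2 : HasDerivAt (fun t : ℝ => t • P u) (P u) 1 := by
    simpa using (hasDerivAt_id (1 : ℝ)).smul_const (P u)
  have heq : (fun t : ℝ => t • P u) =ᶠ[𝓝 (1 : ℝ)] fun t => P (t • u) := by
    filter_upwards [eventually_gt_nhds (by norm_num : (0 : ℝ) < 1)] with t ht
    exact (proj_smul hconv hcone hP ht u).symm
  exact (h1.congr_of_eventuallyEq heq).unique h2

end Aux

/-- Stopping criterion: if `V` is a Clarke generalized Jacobian of the projection both at `x`
and at the Newton iterate `x⁺` with `(V + T) x⁺ = b`, then `x⁺` solves the projection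
equation `P x⁺ + T x⁺ = b`. -/
theorem semismoothNewton_stopping_criterion
    (K : Set X) (hne : K.Nonempty) (hcl : IsClosed K) (hconv : Convex ℝ K)
    (hcone : ∀ c : ℝ, 0 ≤ c → ∀ y ∈ K, c • y ∈ K)
    (P : X → X) (hP : IsMetricProjection K P)
    (T : X →L[ℝ] X) (b : X) (x xp : X) (V : X →L[ℝ] X)
    (hV1 : V ∈ clarkeJacobian P x) (hV2 : V ∈ clarkeJacobian P xp)
    (hiter : (V + T) xp = b) :
    P xp + T xp = b := by
  have hC : Continuous P := by
    apply LipschitzWith.continuous (K := 1)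
    apply LipschitzWith.of_dist_le_mul
    intro a c
    simpa [dist_eq_norm] using proj_lipschitz hconv hP a c
  have key : V xp = P xp := by
    have hsub : clarkeJacobian P xp ⊆ {W : X →L[ℝ] X | W xp = P xp} := by
      apply convexHull_min
      · rintro W ⟨u, hdiff, hu, hW⟩
        have hA : Tendsto (fun k => (fderiv ℝ P (u k)) (u k)) atTop (𝓝 (W xp)) :=
          (isBoundedBilinearMap_apply.continuous.tendsto (W, xp)).comp
            (hW.prodMk_nhds hu)
        have heq : ∀ k, (fderiv ℝ P (u k)) (u k) = P (u k) := fun k =>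
          fderiv_apply_self hconv hcone hP (hdiff k)
        simp only [heq] at hA
        have hB : Tendsto (fun k => P (u k)) atTop (𝓝 (P xp)) :=
          (hC.continuousAt.tendsto).comp hu
        exact tendsto_nhds_unique hA hB
      · intro W1 h1 W2 h2 a c ha hc hac
        simp only [Set.mem_setOf_eq, ContinuousLinearMap.add_apply,
          ContinuousLinearMap.coe_smul', Pi.smul_apply] at *
        rw [h1, h2, ← add_smul, hac, one_smul]
    exact hsub hV2
  rw [ContinuousLinearMap.add_apply] at hiter
  rw [← hiter, ← key]
end

section
/- Let T : X → X be an invertible linear operator with ‖T⁻¹‖ < 1/2 (operator norm) and b ∈ X, and let x̄ be the unique solution of P_K(x) + Tx = b. Then for every x ∈ X, every V ∈ ∂_C P_K(x), and every x⁺ ∈ X with (V + T)x⁺ = b, we have ‖x⁺ − x̄‖ ≤ (‖T⁻¹‖/(1 − ‖T⁻¹‖)) ‖x − x̄‖, where the factor ‖T⁻¹‖/(1 − ‖T⁻¹‖) is strictly less than 1; hence the semi-smooth Newton sequence defined by (V(x^k) + T)x^{k+1} = b converges Q-linearly to x̄ from any starting point. -/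
open RealInnerProductSpace Filter Topology

variable {X : Type*} [NormedAddCommGroup X] [InnerProductSpace ℝ X] [FiniteDimensional ℝ X]

/-- Variational inequality for nearest points of convex sets. -/
lemma nearest_vi {K : Set X} (hconv : Convex ℝ K) {u p : X} (hp : p ∈ K)
    (hnear : ∀ y ∈ K, ‖u - p‖ ≤ ‖u - y‖) : ∀ y ∈ K, ⟪u - p, y - p⟫ ≤ 0 := by
  intro y hy
  have key : ∀ t : ℝ, 0 < t → t ≤ 1 → 2 * ⟪u - p, y - p⟫ ≤ t * ‖y - p‖ ^ 2 := by
    intro t ht ht1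
    have hmem : p + t • (y - p) ∈ K := by
      have := hconv hp hy (by linarith : (0:ℝ) ≤ 1 - t) ht.le (by ring)
      convert this using 1
      module
    have h1 : ‖u - p‖ ≤ ‖(u - p) - t • (y - p)‖ := by
      have := hnear _ hmem
      convert this using 2
      abel
    have h2 : ‖u - p‖ ^ 2 ≤ ‖(u - p) - t • (y - p)‖ ^ 2 := by
      exact pow_le_pow_left₀ (norm_nonneg _) h1 2
    have expand := norm_sub_sq_real (u - p) (t • (y - p))
    rw [real_inner_smul_right, norm_smul t (y - p), Real.norm_eq_abs,
      abs_of_pos ht, mul_pow] at expand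
    have h3 : t * (2 * ⟪u - p, y - p⟫) ≤ t * (t * ‖y - p‖ ^ 2) := by nlinarith
    exact le_of_mul_le_mul_left h3 ht
  have htends : Tendsto (fun t : ℝ => t * ‖y - p‖ ^ 2) (𝓝[>] 0) (𝓝 0) := by
    have : Tendsto (fun t : ℝ => t * ‖y - p‖ ^ 2) (𝓝 0) (𝓝 (0 * ‖y - p‖ ^ 2)) :=
      (continuous_id.mul continuous_const).tendsto 0
    simpa using this.mono_left nhdsWithin_le_nhds
  have hev : ∀ᶠ t in 𝓝[>] (0:ℝ), 2 * ⟪u - p, y - p⟫ ≤ t * ‖y - p‖ ^ 2 := by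
    filter_upwards [Ioc_mem_nhdsGT_of_mem (Set.left_mem_Ico.2 one_pos)] with t ht
    exact key t ht.1 ht.2
  have := ge_of_tendsto htends hev
  linarith

lemma proj_inner {K : Set X} (hconv : Convex ℝ K) {P : X → X}
    (hP : IsMetricProjection K P) (u v : X) :
    ‖P u - P v‖ ^ 2 ≤ ⟪P u - P v, u - v⟫ := by
  have h1 := nearest_vi hconv (hP u).1 (hP u).2 (P v) (hP v).1
  have h2 := nearest_vi hconv (hP v).1 (hP v).2 (P u) (hP u).1
  have e : ⟪P u - P v, u - v⟫ - ‖P u - P v‖ ^ 2 =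
      -(⟪u - P u, P v - P u⟫ + ⟪v - P v, P u - P v⟫) := by
    rw [← real_inner_self_eq_norm_sq]
    simp only [inner_sub_left, inner_sub_right]
    linarith [real_inner_comm u (P v), real_inner_comm u (P u),
      real_inner_comm v (P u), real_inner_comm v (P v),
      real_inner_comm (P u) (P v)]
  nlinarith [h1, h2]

lemma proj_lip {K : Set X} (hconv : Convex ℝ K) {P : X → X}
    (hP : IsMetricProjection K P) (u v : X) : ‖P u - P v‖ ≤ ‖u - v‖ := by
  have h := proj_inner hconv hP u v
  have hcs := real_inner_le_norm (P u - P v) (u - v)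
  nlinarith [norm_nonneg (P u - P v), norm_nonneg (u - v)]

/-- Firm nonexpansiveness: `2P - I` is nonexpansive. -/
lemma proj_firm {K : Set X} (hconv : Convex ℝ K) {P : X → X}
    (hP : IsMetricProjection K P) (u v : X) :
    ‖((2:ℝ) • P u - u) - ((2:ℝ) • P v - v)‖ ≤ ‖u - v‖ := by
  have h := proj_inner hconv hP u v
  have e : ((2:ℝ) • P u - u) - ((2:ℝ) • P v - v) = (2:ℝ) • (P u - P v) - (u - v) := by
    module
  rw [e]
  have hsq : ‖(2:ℝ) • (P u - P v) - (u - v)‖ ^ 2 ≤ ‖u - v‖ ^ 2 := by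
    rw [norm_sub_sq_real, real_inner_smul_left, norm_smul (2:ℝ) (P u - P v),
      Real.norm_eq_abs, abs_two, mul_pow]
    nlinarith [h]
  nlinarith [norm_nonneg ((2:ℝ) • (P u - P v) - (u - v)), norm_nonneg (u - v), hsq]

/-- Uniqueness of nearest points in convex sets. -/
lemma nearest_unique {K : Set X} (hconv : Convex ℝ K) {u p q : X}
    (hp : p ∈ K) (hnp : ∀ y ∈ K, ‖u - p‖ ≤ ‖u - y‖)
    (hq : q ∈ K) (hnq : ∀ y ∈ K, ‖u - q‖ ≤ ‖u - y‖) : p = q := by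
  have h1 := nearest_vi hconv hp hnp q hq
  have h2 := nearest_vi hconv hq hnq p hp
  have e : ‖q - p‖ ^ 2 = ⟪u - p, q - p⟫ + ⟪u - q, p - q⟫ := by
    rw [← real_inner_self_eq_norm_sq]
    simp only [inner_sub_left, inner_sub_right]
    ring
  have : ‖q - p‖ ^ 2 ≤ 0 := by linarith
  have : ‖q - p‖ = 0 := by nlinarith [norm_nonneg (q - p)]
  have := norm_sub_eq_zero_iff.mp this
  exact this.symm

/-- Positive homogeneity of the projection onto a cone. -/
lemma proj_homog {K : Set X} (hconv : Convex ℝ K)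
    (hcone : ∀ c : ℝ, 0 ≤ c → ∀ y ∈ K, c • y ∈ K) {P : X → X}
    (hP : IsMetricProjection K P) {c : ℝ} (hc : 0 < c) (z : X) :
    P (c • z) = c • P z := by
  refine nearest_unique hconv (hP (c • z)).1 (hP (c • z)).2
    (hcone c hc.le _ (hP z).1) ?_
  intro y hy
  have hy' : c⁻¹ • y ∈ K := hcone c⁻¹ (by positivity) y hy
  have := (hP z).2 _ hy'
  have h2 : c * ‖z - P z‖ ≤ c * ‖z - c⁻¹ • y‖ := by
    exact mul_le_mul_of_nonneg_left this hc.le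
  calc ‖c • z - c • P z‖ = c * ‖z - P z‖ := by
        rw [← smul_sub, norm_smul, Real.norm_eq_abs, abs_of_pos hc]
    _ ≤ c * ‖z - c⁻¹ • y‖ := h2
    _ = ‖c • z - y‖ := by
        have hzy : c • z - y = c • (z - c⁻¹ • y) := by
          rw [smul_sub, smul_inv_smul₀ hc.ne']
        rw [hzy, norm_smul c (z - c⁻¹ • y), Real.norm_eq_abs, abs_of_pos hc]

/-- Euler identity at points of differentiability. -/
lemma proj_euler {K : Set X} (hconv : Convex ℝ K)
    (hcone : ∀ c : ℝ, 0 ≤ c → ∀ y ∈ K, c • y ∈ K) {P : X → X}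
    (hP : IsMetricProjection K P) {u : X} (hd : DifferentiableAt ℝ P u) :
    fderiv ℝ P u u = P u := by
  have h1 : HasDerivAt (fun t : ℝ => t • u) u 1 := by
    simpa using (hasDerivAt_id (1:ℝ)).smul_const u
  have h2 : HasDerivAt (fun t : ℝ => P (t • u)) (fderiv ℝ P u u) 1 := by
    have h0 : HasFDerivAt P (fderiv ℝ P u) ((fun t : ℝ => t • u) 1) := by
      simpa using hd.hasFDerivAt
    exact h0.comp_hasDerivAt 1 h1
  have h3 : (fun t : ℝ => P (t • u)) =ᶠ[𝓝 (1:ℝ)] fun t => t • P u := by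
    filter_upwards [isOpen_Ioi.mem_nhds (by norm_num : (1:ℝ) ∈ Set.Ioi (0:ℝ))] with t ht
    exact proj_homog hconv hcone hP ht u
  have h4 : HasDerivAt (fun t : ℝ => t • P u) (fderiv ℝ P u u) 1 :=
    h2.congr_of_eventuallyEq h3.symm
  have h5 : HasDerivAt (fun t : ℝ => t • P u) (P u) 1 := by
    simpa using (hasDerivAt_id (1:ℝ)).smul_const (P u)
  exact h4.unique h5

/-- Key properties of Clarke Jacobian elements of a cone projection. -/
lemma clarke_key {K : Set X} (hconv : Convex ℝ K)
    (hcone : ∀ c : ℝ, 0 ≤ c → ∀ y ∈ K, c • y ∈ K) {P : X → X}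
    (hP : IsMetricProjection K P) {x : X} {V : X →L[ℝ] X}
    (hV : V ∈ clarkeJacobian P x) :
    ‖(2:ℝ) • V - 1‖ ≤ 1 ∧ V x = P x := by
  set C : Set (X →L[ℝ] X) := {W | ‖(2:ℝ) • W - 1‖ ≤ 1 ∧ W x = P x} with hC
  have hCconv : Convex ℝ C := by
    intro W₁ h₁ W₂ h₂ a b ha hb hab
    constructor
    · have e : (2:ℝ) • (a • W₁ + b • W₂) - 1 =
          a • ((2:ℝ) • W₁ - 1) + b • ((2:ℝ) • W₂ - 1) := by
        have h1 : a • ((2:ℝ) • W₁ - 1) + b • ((2:ℝ) • W₂ - 1) =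
            (2:ℝ) • (a • W₁ + b • W₂) - (a + b) • (1 : X →L[ℝ] X) := by module
        rw [h1, hab, one_smul]
      rw [e]
      calc ‖a • ((2:ℝ) • W₁ - 1) + b • ((2:ℝ) • W₂ - 1)‖
          ≤ ‖a • ((2:ℝ) • W₁ - 1)‖ + ‖b • ((2:ℝ) • W₂ - 1)‖ := norm_add_le _ _
        _ ≤ a * 1 + b * 1 := by
            gcongr ?_ + ?_
            · rw [norm_smul a ((2:ℝ) • W₁ - 1), Real.norm_eq_abs, abs_of_nonneg ha]
              exact mul_le_mul_of_nonneg_left h₁.1 ha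
            · rw [norm_smul b ((2:ℝ) • W₂ - 1), Real.norm_eq_abs, abs_of_nonneg hb]
              exact mul_le_mul_of_nonneg_left h₂.1 hb
        _ = 1 := by rw [mul_one, mul_one, hab]
    · simp only [ContinuousLinearMap.add_apply, ContinuousLinearMap.coe_smul',
        Pi.smul_apply, h₁.2, h₂.2, ← add_smul, hab, one_smul]
  have hsub : {W : X →L[ℝ] X | ∃ u : ℕ → X,
      (∀ k, DifferentiableAt ℝ P (u k)) ∧
      Tendsto u atTop (𝓝 x) ∧
      Tendsto (fun k => fderiv ℝ P (u k)) atTop (𝓝 W)} ⊆ C := by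
    rintro W ⟨u, hdiff, hux, hDW⟩
    have hbound : ∀ k, ‖(2:ℝ) • fderiv ℝ P (u k) - 1‖ ≤ 1 := by
      intro k
      have hlip : LipschitzWith 1 (fun z => (2:ℝ) • P z - z) := by
        refine LipschitzWith.of_dist_le_mul fun a b => ?_
        rw [dist_eq_norm, dist_eq_norm, NNReal.coe_one, one_mul]
        exact proj_firm hconv hP a b
      have hder : HasFDerivAt (fun z => (2:ℝ) • P z - z)
          ((2:ℝ) • fderiv ℝ P (u k) - 1) (u k) := by
        have := ((hdiff k).hasFDerivAt.const_smul (2:ℝ)).sub (hasFDerivAt_id (u k))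
        exact this
      simpa using hder.le_of_lipschitz hlip
    constructor
    · have h2 : Tendsto (fun k => (2:ℝ) • fderiv ℝ P (u k) - 1) atTop
          (𝓝 ((2:ℝ) • W - 1)) := (hDW.const_smul (2:ℝ)).sub tendsto_const_nhds
      exact le_of_tendsto (h2.norm) (Eventually.of_forall hbound)
    · have h1 : Tendsto (fun k => fderiv ℝ P (u k) (u k)) atTop (𝓝 (W x)) := by
        have hc : Continuous fun p : (X →L[ℝ] X) × X => p.1 p.2 :=
          isBoundedBilinearMap_apply.continuous
        exact (hc.tendsto (W, x)).comp (hDW.prodMk_nhds hux)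
      have h2 : Tendsto (fun k => P (u k)) atTop (𝓝 (P x)) := by
        have hPc : Continuous P := by
          refine (LipschitzWith.of_dist_le_mul fun a c => ?_).continuous (K := 1)
          rw [dist_eq_norm, dist_eq_norm, NNReal.coe_one, one_mul]
          exact proj_lip hconv hP a c
        exact (hPc.tendsto x).comp hux
      have heq : (fun k => fderiv ℝ P (u k) (u k)) = fun k => P (u k) :=
        funext fun k => proj_euler hconv hcone hP (hdiff k)
      rw [heq] at h1
      exact tendsto_nhds_unique h1 h2
  exact convexHull_min hsub hCconv hV

/-- Global Q-linear convergence: if `T` is invertible with `‖T⁻¹‖ < 1/2` and `x̄` is the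
(unique) solution of `P x + T x = b`, then each Newton step contracts distances to `x̄` by
the factor `‖T⁻¹‖ / (1 − ‖T⁻¹‖) < 1`, and hence every semi-smooth Newton sequence
converges to `x̄` from any starting point. -/
theorem semismoothNewton_Qlinear_convergence
    (K : Set X) (hne : K.Nonempty) (hcl : IsClosed K) (hconv : Convex ℝ K)
    (hcone : ∀ c : ℝ, 0 ≤ c → ∀ y ∈ K, c • y ∈ K)
    (P : X → X) (hP : IsMetricProjection K P)
    (T S : X →L[ℝ] X) (hTS : T * S = 1) (hST : S * T = 1) (hS : ‖S‖ < 1 / 2)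
    (b xb : X) (hxb : P xb + T xb = b) :
    ‖S‖ / (1 - ‖S‖) < 1 ∧
    (∀ (x : X) (V : X →L[ℝ] X), V ∈ clarkeJacobian P x →
      ∀ xp : X, (V + T) xp = b → ‖xp - xb‖ ≤ ‖S‖ / (1 - ‖S‖) * ‖x - xb‖) ∧
    (∀ (xs : ℕ → X) (Vs : ℕ → X →L[ℝ] X),
      (∀ k, Vs k ∈ clarkeJacobian P (xs k)) →
      (∀ k, (Vs k + T) (xs (k + 1)) = b) →
      Tendsto xs atTop (𝓝 xb)) := by
  have hS0 : (0:ℝ) ≤ ‖S‖ := norm_nonneg S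
  have h1S : (0:ℝ) < 1 - ‖S‖ := by linarith
  have hρ : ‖S‖ / (1 - ‖S‖) < 1 := by rw [div_lt_one h1S]; linarith
  have main : ∀ (x : X) (V : X →L[ℝ] X), V ∈ clarkeJacobian P x →
      ∀ xp : X, (V + T) xp = b → ‖xp - xb‖ ≤ ‖S‖ / (1 - ‖S‖) * ‖x - xb‖ := by
    intro x V hV xp hxp
    obtain ⟨hVn, hVx⟩ := clarke_key hconv hcone hP hV
    have h2Vw : ∀ w : X, ‖((2:ℝ) • V - 1) w‖ ≤ ‖w‖ := by
      intro w
      calc ‖((2:ℝ) • V - 1) w‖ ≤ ‖(2:ℝ) • V - 1‖ * ‖w‖ :=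
            ContinuousLinearMap.le_opNorm _ w
        _ ≤ 1 * ‖w‖ := mul_le_mul_of_nonneg_right hVn (norm_nonneg w)
        _ = ‖w‖ := one_mul _
    have hVw : ∀ w : X, ‖V w‖ ≤ ‖w‖ := by
      intro w
      have e : V w = (2⁻¹:ℝ) • (((2:ℝ) • V - 1) w + w) := by
        simp only [ContinuousLinearMap.sub_apply, ContinuousLinearMap.smul_apply,
          ContinuousLinearMap.one_apply]
        module
      calc ‖V w‖ = 2⁻¹ * ‖((2:ℝ) • V - 1) w + w‖ := by
            rw [e, norm_smul (2⁻¹:ℝ) _, Real.norm_eq_abs]; norm_num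
        _ ≤ 2⁻¹ * (‖((2:ℝ) • V - 1) w‖ + ‖w‖) := by
            have := norm_add_le (((2:ℝ) • V - 1) w) w
            linarith
        _ ≤ ‖w‖ := by have := h2Vw w; linarith
    -- key bound : ‖P xb - V xb‖ ≤ ‖x - xb‖
    have ha : ‖(P xb - P x) - (2⁻¹:ℝ) • (xb - x)‖ ≤ 2⁻¹ * ‖xb - x‖ := by
      have hfirm := proj_firm hconv hP xb x
      have e : (P xb - P x) - (2⁻¹:ℝ) • (xb - x) =
          (2⁻¹:ℝ) • (((2:ℝ) • P xb - xb) - ((2:ℝ) • P x - x)) := by module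
      rw [e, norm_smul (2⁻¹:ℝ) _, Real.norm_eq_abs]
      have : |(2⁻¹:ℝ)| = 2⁻¹ := by norm_num
      rw [this]
      linarith
    have hb2 : ‖V (xb - x) - (2⁻¹:ℝ) • (xb - x)‖ ≤ 2⁻¹ * ‖xb - x‖ := by
      have e : V (xb - x) - (2⁻¹:ℝ) • (xb - x) = (2⁻¹:ℝ) • (((2:ℝ) • V - 1) (xb - x)) := by
        simp only [ContinuousLinearMap.sub_apply, ContinuousLinearMap.smul_apply,
          ContinuousLinearMap.one_apply]
        module
      rw [e, norm_smul (2⁻¹:ℝ) _, Real.norm_eq_abs]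
      have : |(2⁻¹:ℝ)| = 2⁻¹ := by norm_num
      rw [this]
      have := h2Vw (xb - x)
      linarith
    have hkey : ‖P xb - V xb‖ ≤ ‖x - xb‖ := by
      have hdecomp : P xb - V xb =
          ((P xb - P x) - (2⁻¹:ℝ) • (xb - x)) - (V (xb - x) - (2⁻¹:ℝ) • (xb - x)) := by
        have hVxb : V xb = V x + V (xb - x) := by rw [← map_add, add_sub_cancel]
        rw [hVxb, hVx]
        abel
      have hrev : ‖x - xb‖ = ‖xb - x‖ := norm_sub_rev x xb
      calc ‖P xb - V xb‖
          ≤ ‖(P xb - P x) - (2⁻¹:ℝ) • (xb - x)‖ + ‖V (xb - x) - (2⁻¹:ℝ) • (xb - x)‖ := by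
            rw [hdecomp]; exact norm_sub_le _ _
        _ ≤ 2⁻¹ * ‖xb - x‖ + 2⁻¹ * ‖xb - x‖ := add_le_add ha hb2
        _ = ‖x - xb‖ := by rw [hrev]; ring
    -- main identity
    have hSid : ∀ w, S (T w) = w := by
      intro w
      have := congrArg (fun A : X →L[ℝ] X => A w) hST
      simpa [ContinuousLinearMap.mul_apply] using this
    have heq : xp - xb = S (P xb - V xb) - S (V (xp - xb)) := by
      have h1 : V xp + T xp = b := by
        simpa [ContinuousLinearMap.add_apply] using hxp
      have h2 : V xp = V xb + V (xp - xb) := by rw [← map_add, add_sub_cancel]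
      have e1 : T xp = b - V xp := by rw [← h1]; abel
      have e2 : T xb = b - P xb := by rw [← hxb]; abel
      have hT : T (xp - xb) = (P xb - V xb) - V (xp - xb) := by
        rw [map_sub, e1, e2, h2]; abel
      have := congrArg S hT
      rw [hSid (xp - xb), map_sub] at this
      exact this
    have hest : ‖xp - xb‖ ≤ ‖S‖ * ‖x - xb‖ + ‖S‖ * ‖xp - xb‖ := by
      calc ‖xp - xb‖ = ‖S (P xb - V xb) - S (V (xp - xb))‖ := by rw [← heq]
        _ ≤ ‖S (P xb - V xb)‖ + ‖S (V (xp - xb))‖ := norm_sub_le _ _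
        _ ≤ ‖S‖ * ‖P xb - V xb‖ + ‖S‖ * ‖V (xp - xb)‖ :=
            add_le_add (S.le_opNorm _) (S.le_opNorm _)
        _ ≤ ‖S‖ * ‖x - xb‖ + ‖S‖ * ‖xp - xb‖ := by
            have h3 : ‖V (xp - xb)‖ ≤ ‖xp - xb‖ := hVw _
            have h4 := mul_le_mul_of_nonneg_left hkey hS0
            have h5 := mul_le_mul_of_nonneg_left h3 hS0
            linarith
    rw [div_mul_eq_mul_div, le_div_iff₀ h1S]
    nlinarith [hest]
  refine ⟨hρ, main, ?_⟩
  intro xs Vs hVs hNewton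
  set ρ := ‖S‖ / (1 - ‖S‖) with hρdef
  have hρ0 : 0 ≤ ρ := div_nonneg hS0 h1S.le
  have hstep : ∀ k, ‖xs (k+1) - xb‖ ≤ ρ * ‖xs k - xb‖ := fun k =>
    main (xs k) (Vs k) (hVs k) _ (hNewton k)
  have hbd : ∀ k, ‖xs k - xb‖ ≤ ρ ^ k * ‖xs 0 - xb‖ := by
    intro k
    induction k with
    | zero => simp
    | succ n ih =>
        calc ‖xs (n+1) - xb‖ ≤ ρ * ‖xs n - xb‖ := hstep n
          _ ≤ ρ * (ρ ^ n * ‖xs 0 - xb‖) := mul_le_mul_of_nonneg_left ih hρ0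
          _ = ρ ^ (n+1) * ‖xs 0 - xb‖ := by ring
  have hlim : Tendsto (fun k => ρ ^ k * ‖xs 0 - xb‖) atTop (𝓝 0) := by
    simpa using (tendsto_pow_atTop_nhds_zero_of_lt_one hρ0 hρ).mul_const ‖xs 0 - xb‖
  have hsq := squeeze_zero (fun k => norm_nonneg _) hbd hlim
  rw [tendsto_iff_norm_sub_tendsto_zero]
  exact hsq
end

section
/- Let Q : X → X be a linear operator with ‖Q − I‖ < 1 (operator norm). Then for every q ∈ X the equation (Q − I)P_K(x) + x = −q has exactly one solution x ∈ X. -/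
/-!
The metric projection onto a convex set is nonexpansive, so `x ↦ (Q - 1) (P x)` is a
contraction with constant `‖Q - 1‖ < 1`. Adding the identity to a contraction of a complete
space gives a bijection (Banach's fixed point theorem applied to `x ↦ y - f x`).
-/

open RealInnerProductSpace Filter Topology

variable {X : Type*} [NormedAddCommGroup X] [InnerProductSpace ℝ X] [FiniteDimensional ℝ X]

section MetricProjection

variable {E : Type*} [NormedAddCommGroup E] [InnerProductSpace ℝ E] {K : Set E} {P : E → E}

theorem IsMetricProjection.real_inner_sub_le_zero (hP : IsMetricProjection K P)
    (hK : Convex ℝ K) (z : E) {w : E} (hw : w ∈ K) : ⟪z - P z, w - P z⟫ ≤ 0 := by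
  obtain ⟨hPz, hmin⟩ := hP z
  have : Nonempty K := ⟨⟨P z, hPz⟩⟩
  refine (norm_eq_iInf_iff_real_inner_le_zero hK hPz).mp ?_ w hw
  refine le_antisymm (le_ciInf fun y => hmin y y.2) (ciInf_le ?_ (⟨P z, hPz⟩ : K))
  exact ⟨0, by rintro r ⟨y, rfl⟩; positivity⟩

/-- Adding the two variational inequalities gives `‖P x - P y‖² ≤ ⟪x - y, P x - P y⟫`. -/
theorem IsMetricProjection.lipschitzWith_one_s14 (hP : IsMetricProjection K P)
    (hK : Convex ℝ K) : LipschitzWith 1 P := by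
  refine LipschitzWith.of_dist_le_mul fun x y => ?_
  rw [NNReal.coe_one, one_mul, dist_eq_norm, dist_eq_norm]
  have hx := hP.real_inner_sub_le_zero hK x (hP y).1
  have hy := hP.real_inner_sub_le_zero hK y (hP x).1
  have key : ‖P x - P y‖ ^ 2 ≤ ‖x - y‖ * ‖P x - P y‖ :=
    calc ‖P x - P y‖ ^ 2 = ⟪P x - P y, P x - P y⟫ := (real_inner_self_eq_norm_sq _).symm
      _ ≤ ⟪x - y, P x - P y⟫ := by
        have h₁ := real_inner_comm (P x) (P y)
        have h₂ := real_inner_comm x (P x)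
        have h₃ := real_inner_comm y (P y)
        simp only [inner_sub_left, inner_sub_right] at hx hy ⊢
        linarith
      _ ≤ ‖x - y‖ * ‖P x - P y‖ := real_inner_le_norm _ _
  nlinarith [norm_nonneg (P x - P y), norm_nonneg (x - y)]

end MetricProjection

theorem ContractingWith.existsUnique_add_self_eq {E : Type*} [NormedAddCommGroup E]
    [CompleteSpace E] {L : NNReal} {f : E → E} (hf : ContractingWith L f) (y : E) :
    ∃! x, f x + x = y := by
  have hg : ContractingWith L (fun x => y - f x) :=
    ⟨hf.1, LipschitzWith.of_dist_le_mul fun a b => by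
      simpa only [dist_sub_left] using hf.2.dist_le_mul a b⟩
  have solves_iff : ∀ x, f x + x = y ↔ Function.IsFixedPt (fun x => y - f x) x := fun x => by
    rw [Function.IsFixedPt, sub_eq_iff_eq_add', eq_comm]
  refine ⟨hg.fixedPoint _, (solves_iff _).mpr hg.fixedPoint_isFixedPt, fun x hx => ?_⟩
  exact hg.fixedPoint_unique ((solves_iff x).mp hx)

theorem quadProjEquation_existsUnique_of_norm_lt_one_general
    (K : Set X) (hconv : Convex ℝ K)
    (P : X → X) (hP : IsMetricProjection K P)
    (Q : X →L[ℝ] X) (hQ : ‖Q - 1‖ < 1) (q : X) :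
    ∃! x : X, (Q - 1) (P x) + x = -q := by
  have : CompleteSpace X := FiniteDimensional.complete ℝ X
  have hcontr : ContractingWith ‖Q - 1‖₊ (fun x => (Q - 1) (P x)) := by
    have hlip := (Q - 1).lipschitz.comp (hP.lipschitzWith_one_s14 hconv)
    rw [mul_one] at hlip
    exact ⟨hQ, hlip⟩
  exact hcontr.existsUnique_add_self_eq (-q)

/-- If `‖Q − I‖ < 1`, then for every `q` the projection equation `(Q − I) (P x) + x = −q`
has exactly one solution. -/
theorem quadProjEquation_existsUnique_of_norm_lt_one
    (K : Set X) (hne : K.Nonempty) (hcl : IsClosed K) (hconv : Convex ℝ K)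
    (hcone : ∀ c : ℝ, 0 ≤ c → ∀ y ∈ K, c • y ∈ K)
    (P : X → X) (hP : IsMetricProjection K P)
    (Q : X →L[ℝ] X) (hQ : ‖Q - 1‖ < 1) (q : X) :
    ∃! x : X, (Q - 1) (P x) + x = -q :=
  quadProjEquation_existsUnique_of_norm_lt_one_general K hconv P hP Q hQ q
end

section
/- Let Q : X → X be an invertible linear operator with ‖Q⁻¹ − I‖ < 1 (operator norm). Then for every q ∈ X the equation (Q − I)P_K(x) + x = −q has exactly one solution x ∈ X. -/
/-! The metric projection `P` onto a convex set is firmly nonexpansive, so `I - P` is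
nonexpansive. Applying `S = Q⁻¹` to the equation turns it into the fixed-point equation
`x = -S q - (S - I) (x - P x)`, whose right-hand side is a contraction with constant
`‖S - I‖ < 1`; Banach's fixed-point theorem gives existence and uniqueness. -/

open RealInnerProductSpace Filter Topology

variable {X : Type*} [NormedAddCommGroup X] [InnerProductSpace ℝ X] [FiniteDimensional ℝ X]

section

variable {E : Type*} [NormedAddCommGroup E] [InnerProductSpace ℝ E]

theorem lipschitzWith_one_sub_of_sq_norm_sub_le_inner {f : E → E}
    (hf : ∀ x y, ‖f x - f y‖ ^ 2 ≤ ⟪x - y, f x - f y⟫) : LipschitzWith 1 fun x => x - f x := by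
  refine LipschitzWith.of_dist_le_mul fun x y => ?_
  rw [NNReal.coe_one, one_mul, dist_eq_norm, dist_eq_norm, sub_sub_sub_comm]
  have h := norm_sub_sq_real (x - y) (f x - f y)
  nlinarith [hf x y, norm_nonneg (x - y - (f x - f y)), norm_nonneg (x - y)]

theorem sub_one_apply_add_eq_neg_iff {Q S : E →L[ℝ] E} (hQS : Q * S = 1) (hSQ : S * Q = 1)
    (a b q : E) : (Q - 1) a + b = -q ↔ -S q - (S - 1) (b - a) = b := by
  have hS : Function.Injective S := Function.LeftInverse.injective (g := Q) fun u => by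
    simpa using congr($hQS u)
  have hSQa : S (Q a) = a := by simpa using congr($hSQ a)
  rw [← hS.eq_iff]
  simp only [map_add, map_neg, sub_apply, one_apply_eq_self, map_sub, hSQa]
  constructor <;> intro h <;> linear_combination (norm := module) -h

namespace IsMetricProjection

variable {K : Set E} {P : E → E}

theorem inner_sub_le_zero (hP : IsMetricProjection K P) (hK : Convex ℝ K) (z : E) {w : E}
    (hw : w ∈ K) : ⟪z - P z, w - P z⟫ ≤ 0 := by
  have : Nonempty K := ⟨⟨P z, (hP z).1⟩⟩
  refine (norm_eq_iInf_iff_real_inner_le_zero hK (hP z).1).mp ?_ w hw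
  exact le_antisymm (le_ciInf fun w => (hP z).2 w w.2)
    (ciInf_le ⟨0, by rintro _ ⟨w, rfl⟩; exact norm_nonneg (z - w)⟩ (⟨P z, (hP z).1⟩ : K))

theorem sq_norm_sub_le_inner (hP : IsMetricProjection K P) (hK : Convex ℝ K) (x y : E) :
    ‖P x - P y‖ ^ 2 ≤ ⟪x - y, P x - P y⟫ := by
  have hx := hP.inner_sub_le_zero hK x (hP y).1
  have hy := hP.inner_sub_le_zero hK y (hP x).1
  rw [← real_inner_self_eq_norm_sq]
  simp only [inner_sub_left, inner_sub_right, real_inner_comm] at hx hy ⊢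
  linarith

end IsMetricProjection

end

theorem quadProjEquation_existsUnique_of_inv_norm_lt_one_general
    (K : Set X) (hconv : Convex ℝ K)
    (P : X → X) (hP : IsMetricProjection K P)
    (Q S : X →L[ℝ] X) (hQS : Q * S = 1) (hSQ : S * Q = 1) (hS : ‖S - 1‖ < 1)
    (q : X) :
    ∃! x : X, (Q - 1) (P x) + x = -q := by
  set T : X → X := fun x => -S q - (S - 1) (x - P x)
  have hT : ContractingWith ‖S - 1‖₊ T := by
    refine ⟨hS, LipschitzWith.of_dist_le_mul fun x y => ?_⟩
    rw [dist_sub_left]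
    simpa using ((S - 1).lipschitz.comp (lipschitzWith_one_sub_of_sq_norm_sub_le_inner
      (hP.sq_norm_sub_le_inner hconv))).dist_le_mul x y
  have hfix (x : X) : (Q - 1) (P x) + x = -q ↔ Function.IsFixedPt T x :=
    sub_one_apply_add_eq_neg_iff hQS hSQ (P x) x q
  exact ⟨hT.fixedPoint T, (hfix _).2 hT.fixedPoint_isFixedPt,
    fun y hy => hT.fixedPoint_unique ((hfix y).1 hy)⟩

/-- If `Q` is invertible with `‖Q⁻¹ − I‖ < 1`, then for every `q` the projection equation
`(Q − I) (P x) + x = −q` has exactly one solution. -/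
theorem quadProjEquation_existsUnique_of_inv_norm_lt_one
    (K : Set X) (hne : K.Nonempty) (hcl : IsClosed K) (hconv : Convex ℝ K)
    (hcone : ∀ c : ℝ, 0 ≤ c → ∀ y ∈ K, c • y ∈ K)
    (P : X → X) (hP : IsMetricProjection K P)
    (Q S : X →L[ℝ] X) (hQS : Q * S = 1) (hSQ : S * Q = 1) (hS : ‖S - 1‖ < 1)
    (q : X) :
    ∃! x : X, (Q - 1) (P x) + x = -q :=
  quadProjEquation_existsUnique_of_inv_norm_lt_one_general K hconv P hP Q S hQS hSQ hS q
end
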